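/- arXiv:1311.7179 — 2 statements merged into one kernel-verified Lean document; each statement's English description precedes it below -/
import Mathlib

section
/- In H_{0,c}(μ_2) (the t = 0 rational Cherednik algebra of μ_2), the elements A = x², B = xy − c·s, C = y² are central and satisfy AC = (B + c)(B − c) = B² − c². -/
section general
variable {R : Type} (X Y S e : R)

theorem aux_YA [Ring R] (hSX : S * X = -(X * S)) (hYX : Y * X = X * Y - 2 * e * S)
    (he : ∀ z : R, e * z = z * e) : Y * (X * X) = (X * X) * Y := by
  calc Y * (X * X) = (Y * X) * X := by noncomm_ring
    _ = (X * Y - 2 * e * S) * X := by rw [hYX]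
    _ = X * (Y * X) - 2 * e * (S * X) := by noncomm_ring
    _ = X * (X * Y - 2 * e * S) - 2 * e * (-(X * S)) := by rw [hYX, hSX]
    _ = (X * X) * Y - X * (2 * e * S) + 2 * (e * X) * S := by noncomm_ring
    _ = (X * X) * Y - X * (2 * e * S) + 2 * (X * e) * S := by rw [he X]
    _ = (X * X) * Y := by noncomm_ring

theorem aux_SA [Ring R] (hSX : S * X = -(X * S)) : S * (X * X) = (X * X) * S := by
  calc S * (X * X) = (S * X) * X := by noncomm_ring
    _ = (-(X * S)) * X := by rw [hSX]
    _ = -(X * (S * X)) := by noncomm_ring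
    _ = -(X * (-(X * S))) := by rw [hSX]
    _ = (X * X) * S := by noncomm_ring

theorem aux_XC [Ring R] (hSY : S * Y = -(Y * S)) (hYX : Y * X = X * Y - 2 * e * S)
    (he : ∀ z : R, e * z = z * e) : X * (Y * Y) = (Y * Y) * X := by
  symm
  calc (Y * Y) * X = Y * (Y * X) := by noncomm_ring
    _ = Y * (X * Y - 2 * e * S) := by rw [hYX]
    _ = (Y * X) * Y - 2 * (Y * e) * S := by noncomm_ring
    _ = (X * Y - 2 * e * S) * Y - 2 * (e * Y) * S := by rw [hYX, he Y]
    _ = X * (Y * Y) - 2 * e * (S * Y) - 2 * (e * Y) * S := by noncomm_ring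
    _ = X * (Y * Y) - 2 * e * (-(Y * S)) - 2 * (e * Y) * S := by rw [hSY]
    _ = X * (Y * Y) := by noncomm_ring

theorem aux_SC [Ring R] (hSY : S * Y = -(Y * S)) : S * (Y * Y) = (Y * Y) * S := by
  calc S * (Y * Y) = (S * Y) * Y := by noncomm_ring
    _ = (-(Y * S)) * Y := by rw [hSY]
    _ = -(Y * (S * Y)) := by noncomm_ring
    _ = -(Y * (-(Y * S))) := by rw [hSY]
    _ = (Y * Y) * S := by noncomm_ring

theorem aux_BX [Ring R] (hSX : S * X = -(X * S)) (hYX : Y * X = X * Y - 2 * e * S)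
    (he : ∀ z : R, e * z = z * e) : (X * Y - e * S) * X = X * (X * Y - e * S) := by
  calc (X * Y - e * S) * X = X * (Y * X) - e * (S * X) := by noncomm_ring
    _ = X * (X * Y - 2 * e * S) - e * (-(X * S)) := by rw [hYX, hSX]
    _ = X * (X * Y) - 2 * ((X * e) * S) + (e * X) * S := by noncomm_ring
    _ = X * (X * Y) - 2 * ((e * X) * S) + (e * X) * S := by rw [← he X]
    _ = X * (X * Y) - (e * X) * S := by noncomm_ring
    _ = X * (X * Y) - (X * e) * S := by rw [he X]
    _ = X * (X * Y - e * S) := by noncomm_ring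

theorem aux_BY [Ring R] (hSY : S * Y = -(Y * S)) (hYX : Y * X = X * Y - 2 * e * S)
    (he : ∀ z : R, e * z = z * e) : (X * Y - e * S) * Y = Y * (X * Y - e * S) := by
  symm
  calc Y * (X * Y - e * S) = (Y * X) * Y - (Y * e) * S := by noncomm_ring
    _ = (X * Y - 2 * e * S) * Y - (e * Y) * S := by rw [hYX, he Y]
    _ = (X * Y) * Y - 2 * (e * (S * Y)) - (e * (Y * S)) := by noncomm_ring
    _ = (X * Y) * Y - 2 * (e * (-(Y * S))) - (e * (Y * S)) := by rw [hSY]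
    _ = (X * Y) * Y + e * (Y * S) := by noncomm_ring
    _ = (X * Y) * Y - e * (-(Y * S)) := by noncomm_ring
    _ = (X * Y) * Y - e * (S * Y) := by rw [hSY]
    _ = (X * Y - e * S) * Y := by noncomm_ring

theorem aux_SXY [Ring R] (hSX : S * X = -(X * S)) (hSY : S * Y = -(Y * S)) :
    S * (X * Y) = X * (Y * S) := by
  calc S * (X * Y) = (S * X) * Y := by noncomm_ring
    _ = (-(X * S)) * Y := by rw [hSX]
    _ = -(X * (S * Y)) := by noncomm_ring
    _ = -(X * (-(Y * S))) := by rw [hSY]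
    _ = X * (Y * S) := by noncomm_ring

theorem aux_BS [Ring R] (hSX : S * X = -(X * S)) (hSY : S * Y = -(Y * S))
    (he : ∀ z : R, e * z = z * e) : (X * Y - e * S) * S = S * (X * Y - e * S) := by
  symm
  calc S * (X * Y - e * S) = S * (X * Y) - (S * e) * S := by noncomm_ring
    _ = X * (Y * S) - (e * S) * S := by rw [aux_SXY X Y S hSX hSY, ← he S]
    _ = (X * Y - e * S) * S := by noncomm_ring

theorem aux_prod [Ring R] (hS2 : S * S = 1) (hSX : S * X = -(X * S))
    (hSY : S * Y = -(Y * S)) (hYX : Y * X = X * Y - 2 * e * S)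
    (he : ∀ z : R, e * z = z * e) :
    (X * Y - e * S) * (X * Y - e * S) = (X * X) * (Y * Y) + e * e := by
  have hSXY := aux_SXY X Y S hSX hSY
  calc (X * Y - e * S) * (X * Y - e * S)
      = X * (Y * X) * Y - (X * (Y * e)) * S - e * (S * (X * Y)) + e * ((S * e) * S) := by
        noncomm_ring
    _ = X * (X * Y - 2 * e * S) * Y - (X * (e * Y)) * S - e * (X * (Y * S))
          + e * ((e * S) * S) := by rw [hYX, hSXY, he Y, he S]
    _ = (X * X) * (Y * Y) - 2 * ((X * e) * (S * Y)) - ((X * e) * Y) * S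
          - e * (X * (Y * S)) + (e * e) * (S * S) := by noncomm_ring
    _ = (X * X) * (Y * Y) - 2 * ((e * X) * (-(Y * S))) - ((e * X) * Y) * S
          - e * (X * (Y * S)) + (e * e) * 1 := by rw [← he X, hSY, hS2]
    _ = (X * X) * (Y * Y) + 2 * (e * (X * (Y * S))) - e * ((X * Y) * S)
          - e * (X * (Y * S)) + e * e := by noncomm_ring
    _ = (X * X) * (Y * Y) + e * e := by noncomm_ring
theorem aux_prod2 [Ring R] (hS2 : S * S = 1) (hSX : S * X = -(X * S))
    (hSY : S * Y = -(Y * S)) (hYX : Y * X = X * Y - 2 * e * S)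
    (he : ∀ z : R, e * z = z * e) :
    (X * X) * (Y * Y) = ((X * Y - e * S) + e) * ((X * Y - e * S) - e) := by
  have hBB := aux_prod X Y S e hS2 hSX hSY hYX he
  symm
  calc ((X * Y - e * S) + e) * ((X * Y - e * S) - e)
      = (X * Y - e * S) * (X * Y - e * S) + e * (X * Y - e * S)
          - (X * Y - e * S) * e - e * e := by noncomm_ring
    _ = (X * Y - e * S) * (X * Y - e * S) + (X * Y - e * S) * e
          - (X * Y - e * S) * e - e * e := by rw [he (X * Y - e * S)]
    _ = (X * Y - e * S) * (X * Y - e * S) - e * e := by noncomm_ring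
    _ = ((X * X) * (Y * Y) + e * e) - e * e := by rw [hBB]
    _ = (X * X) * (Y * Y) := by noncomm_ring

theorem aux_prod3 [Ring R] (hS2 : S * S = 1) (hSX : S * X = -(X * S))
    (hSY : S * Y = -(Y * S)) (hYX : Y * X = X * Y - 2 * e * S)
    (he : ∀ z : R, e * z = z * e) :
    (X * X) * (Y * Y) = (X * Y - e * S) ^ 2 - e ^ 2 := by
  have hBB := aux_prod X Y S e hS2 hSX hSY hYX he
  rw [sq, sq, hBB]
  noncomm_ring
end general

/-- The defining relations of the `t = 0` rational Cherednik algebra `H_{0,c}(μ₂)`: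
with `x = ι 0`, `y = ι 1`, `s = ι 2`, we impose `s² = 1`, `sx = -xs`, `sy = -ys`,
`[y,x] = -2c·s`. -/
inductive CherednikMu2Rel0 (c : ℂ) :
    FreeAlgebra ℂ (Fin 3) → FreeAlgebra ℂ (Fin 3) → Prop
  | s_sq : CherednikMu2Rel0 c (FreeAlgebra.ι ℂ (2 : Fin 3) * FreeAlgebra.ι ℂ (2 : Fin 3)) 1
  | s_x : CherednikMu2Rel0 c (FreeAlgebra.ι ℂ (2 : Fin 3) * FreeAlgebra.ι ℂ (0 : Fin 3))
      (-(FreeAlgebra.ι ℂ (0 : Fin 3) * FreeAlgebra.ι ℂ (2 : Fin 3)))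
  | s_y : CherednikMu2Rel0 c (FreeAlgebra.ι ℂ (2 : Fin 3) * FreeAlgebra.ι ℂ (1 : Fin 3))
      (-(FreeAlgebra.ι ℂ (1 : Fin 3) * FreeAlgebra.ι ℂ (2 : Fin 3)))
  | comm : CherednikMu2Rel0 c
      (FreeAlgebra.ι ℂ (1 : Fin 3) * FreeAlgebra.ι ℂ (0 : Fin 3) -
        FreeAlgebra.ι ℂ (0 : Fin 3) * FreeAlgebra.ι ℂ (1 : Fin 3))
      ((-(2 * c)) • FreeAlgebra.ι ℂ (2 : Fin 3))

/-- The image of `x` in `H_{0,c}(μ₂)`. -/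
noncomputable def chX0 (c : ℂ) : RingQuot (CherednikMu2Rel0 c) :=
  RingQuot.mkAlgHom ℂ (CherednikMu2Rel0 c) (FreeAlgebra.ι ℂ (0 : Fin 3))

/-- The image of `y` in `H_{0,c}(μ₂)`. -/
noncomputable def chY0 (c : ℂ) : RingQuot (CherednikMu2Rel0 c) :=
  RingQuot.mkAlgHom ℂ (CherednikMu2Rel0 c) (FreeAlgebra.ι ℂ (1 : Fin 3))

/-- The image of `s` in `H_{0,c}(μ₂)`. -/
noncomputable def chS0 (c : ℂ) : RingQuot (CherednikMu2Rel0 c) :=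
  RingQuot.mkAlgHom ℂ (CherednikMu2Rel0 c) (FreeAlgebra.ι ℂ (2 : Fin 3))

theorem ch_hS2 (c : ℂ) : chS0 c * chS0 c = 1 := by
  have h := RingQuot.mkAlgHom_rel ℂ (CherednikMu2Rel0.s_sq (c := c))
  simpa [chS0, map_mul] using h

theorem ch_hSX (c : ℂ) : chS0 c * chX0 c = -(chX0 c * chS0 c) := by
  have h := RingQuot.mkAlgHom_rel ℂ (CherednikMu2Rel0.s_x (c := c))
  simpa [chS0, chX0, map_mul] using h

theorem ch_hSY (c : ℂ) : chS0 c * chY0 c = -(chY0 c * chS0 c) := by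
  have h := RingQuot.mkAlgHom_rel ℂ (CherednikMu2Rel0.s_y (c := c))
  simpa [chS0, chY0, map_mul] using h

theorem ch_hYX (c : ℂ) : chY0 c * chX0 c =
    chX0 c * chY0 c - 2 * algebraMap ℂ (RingQuot (CherednikMu2Rel0 c)) c * chS0 c := by
  have h := RingQuot.mkAlgHom_rel ℂ (CherednikMu2Rel0.comm (c := c))
  simp only [map_sub, map_mul, Algebra.smul_def, map_neg, map_ofNat, AlgHom.commutes] at h
  rw [sub_eq_iff_eq_add] at h
  simp only [chX0, chY0, chS0]
  rw [h]
  noncomm_ring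
  rw [smul_mul_assoc, add_comm]

theorem ch_mem_center (c : ℂ) (z : RingQuot (CherednikMu2Rel0 c))
    (hx : z * chX0 c = chX0 c * z) (hy : z * chY0 c = chY0 c * z)
    (hs : z * chS0 c = chS0 c * z) :
    z ∈ Subring.center (RingQuot (CherednikMu2Rel0 c)) := by
  rw [Subring.mem_center_iff]
  intro g
  obtain ⟨a, rfl⟩ := RingQuot.mkAlgHom_surjective ℂ (CherednikMu2Rel0 c) g
  induction a using FreeAlgebra.induction with
  | grade0 r => rw [AlgHom.commutes]; exact Algebra.commutes r z
  | grade1 i =>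
    fin_cases i
    · exact hx.symm
    · exact hy.symm
    · exact hs.symm
  | mul a b ha hb => rw [map_mul, mul_assoc, hb, ← mul_assoc, ha, mul_assoc]
  | add a b ha hb => rw [map_add, add_mul, ha, hb, mul_add]

/-- In `H_{0,c}(μ₂)`, the elements `A = x²`, `B = xy − c·s`, `C = y²` are
central and satisfy `AC = (B + c)(B − c) = B² − c²`. -/
theorem cherednik_mu2_t0_center (c : ℂ)
    (A B C : RingQuot (CherednikMu2Rel0 c))
    (hA : A = chX0 c * chX0 c)
    (hB : B = chX0 c * chY0 c - c • chS0 c)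
    (hC : C = chY0 c * chY0 c) :
    A ∈ Subring.center (RingQuot (CherednikMu2Rel0 c)) ∧
    B ∈ Subring.center (RingQuot (CherednikMu2Rel0 c)) ∧
    C ∈ Subring.center (RingQuot (CherednikMu2Rel0 c)) ∧
    A * C = (B + algebraMap ℂ _ c) * (B - algebraMap ℂ _ c) ∧
    A * C = B ^ 2 - algebraMap ℂ _ (c ^ 2) := by
  have he : ∀ z : RingQuot (CherednikMu2Rel0 c),
      algebraMap ℂ (RingQuot (CherednikMu2Rel0 c)) c * z =
        z * algebraMap ℂ (RingQuot (CherednikMu2Rel0 c)) c :=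
    fun z => Algebra.commutes c z
  have hS2 := ch_hS2 c
  have hSX := ch_hSX c
  have hSY := ch_hSY c
  have hYX := ch_hYX c
  have hBe : B = chX0 c * chY0 c -
      algebraMap ℂ (RingQuot (CherednikMu2Rel0 c)) c * chS0 c := by
    rw [hB, Algebra.smul_def]
  refine ⟨?_, ?_, ?_, ?_, ?_⟩
  · rw [hA]
    exact ch_mem_center c _ (by rw [mul_assoc])
      (aux_YA (chX0 c) (chY0 c) (chS0 c) _ hSX hYX he).symm
      (aux_SA (chX0 c) (chS0 c) hSX).symm
  · rw [hBe]
    exact ch_mem_center c _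
      (aux_BX (chX0 c) (chY0 c) (chS0 c) _ hSX hYX he)
      (aux_BY (chX0 c) (chY0 c) (chS0 c) _ hSY hYX he)
      (aux_BS (chX0 c) (chY0 c) (chS0 c) _ hSX hSY he)
  · rw [hC]
    exact ch_mem_center c _
      (aux_XC (chX0 c) (chY0 c) (chS0 c) _ hSY hYX he).symm (by rw [mul_assoc])
      (aux_SC (chY0 c) (chS0 c) hSY).symm
  · rw [hA, hC, hBe]
    exact aux_prod2 (chX0 c) (chY0 c) (chS0 c) _ hS2 hSX hSY hYX he
  · rw [hA, hC, hBe, map_pow]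
    exact aux_prod3 (chX0 c) (chY0 c) (chS0 c) _ hS2 hSX hSY hYX he
end

section
/- Let A be an R-algebra, free and finitely generated as a module over a commutative integral domain R, and K ⊇ Frac(R) a field such that K⊗A is split semisimple with primitive central idempotents (e_χ). Then there exists a unique finest partition Bl(A) of the index set such that for every block B ∈ Bl(A), the sum Σ_{χ∈B} e_χ lies in A, and the elements e_B = Σ_{χ∈B} e_χ are precisely the primitive idempotents of the centre Z(A). -/
/-!
Every central idempotent of `KA` is the sum of the `e_χ` it does not annihilate, because each
`e_χ` is primitive. So the central idempotents of `KA` are the sums `e_T` over subsets `T` of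
the index set, and since `e_T e_{T'} = e_{T ∩ T'}` and `e_{Tᶜ} = 1 - e_T`, the subsets with
`e_T ∈ A` form a Boolean subalgebra of the power set. Its atoms are the classes of the
relation that holds between `χ` and `ψ` when no such subset separates them; these are the
blocks. As `A` spans `KA` over `K`, an element centralising `A` is central in `KA`; hence the
primitive idempotents of `Z(A)` are the `e_T` with `T` an atom, i.e. the block sums.
-/

open Classical TensorProduct

namespace OrthogonalIdempotents

variable {B : Type*} [Ring B] {I : Type*} [DecidableEq I] {e : I → B}

theorem sum_mul_sum (he : OrthogonalIdempotents e) (s t : Finset I) :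
    (∑ i ∈ s, e i) * ∑ i ∈ t, e i = ∑ i ∈ s ∩ t, e i := by
  rw [Finset.sum_mul, ← Finset.sum_ite_mem]
  refine Finset.sum_congr rfl fun i _ => ?_
  split_ifs with hi
  · exact he.mul_sum_of_mem hi
  · exact he.mul_sum_of_notMem hi

theorem sum_injective (he : OrthogonalIdempotents e) (hne : ∀ i, e i ≠ 0) :
    Function.Injective fun s : Finset I => ∑ i ∈ s, e i := by
  have hsubset {s t : Finset I} (hst : ∑ i ∈ s, e i = ∑ i ∈ t, e i) : s ⊆ t := by
    intro i hi
    by_contra hit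
    apply hne i
    rw [← he.mul_sum_of_mem hi, hst, he.mul_sum_of_notMem hit]
  exact fun s t hst => (hsubset hst).antisymm (hsubset hst.symm)

theorem sum_eq_zero_iff (he : OrthogonalIdempotents e) (hne : ∀ i, e i ≠ 0) {s : Finset I} :
    ∑ i ∈ s, e i = 0 ↔ s = ∅ :=
  ⟨fun h => he.sum_injective hne (h.trans Finset.sum_empty.symm), fun h => h ▸ Finset.sum_empty⟩

end OrthogonalIdempotents

theorem IsIdempotentElem.mul_eq_zero_or_eq_of_mem_center {B : Type*} [Ring B] {z p : B}
    (hz : z ∈ Subring.center B) (hz' : IsIdempotentElem z)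
    (hp : p ∈ Subring.center B) (hp' : IsIdempotentElem p)
    (hprim : ∀ f g : B, f ∈ Subring.center B → g ∈ Subring.center B →
      IsIdempotentElem f → IsIdempotentElem g → f * g = 0 → f + g = p → f = 0 ∨ g = 0) :
    z * p = 0 ∨ z * p = p := by
  have hcomm (x : B) : Commute x p := Subring.mem_center_iff.1 hp x
  have h1z : 1 - z ∈ Subring.center B := Subring.sub_mem _ (Subring.one_mem _) hz
  have horth : z * p * ((1 - z) * p) = 0 := by
    rw [(hcomm _).symm.mul_mul_mul_comm, hz'.mul_one_sub_self, zero_mul]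
  refine (hprim _ _ (Subring.mul_mem _ hz hp) (Subring.mul_mem _ h1z hp)
    (.mul_of_commute (hcomm z) hz' hp') (.mul_of_commute (hcomm _) hz'.one_sub hp') horth
    (by rw [← add_mul, add_sub_cancel, one_mul])).imp id fun h => ?_
  rwa [sub_mul, one_mul, sub_eq_zero, eq_comm] at h

theorem CompleteOrthogonalIdempotents.exists_sum_eq_of_mem_center {B : Type*} [Ring B]
    {I : Type*} [Fintype I] {e : I → B} (he : CompleteOrthogonalIdempotents e)
    (hcentral : ∀ i, e i ∈ Subring.center B)
    (hprim : ∀ i, ∀ f g : B, f ∈ Subring.center B → g ∈ Subring.center B →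
      IsIdempotentElem f → IsIdempotentElem g → f * g = 0 → f + g = e i → f = 0 ∨ g = 0)
    {z : B} (hz : z ∈ Subring.center B) (hz' : IsIdempotentElem z) :
    ∃ s : Finset I, ∑ i ∈ s, e i = z := by
  refine ⟨Finset.univ.filter fun i => z * e i = e i, ?_⟩
  calc ∑ i ∈ Finset.univ.filter fun i => z * e i = e i, e i
      = ∑ i, if z * e i = e i then e i else 0 := Finset.sum_filter _ _
    _ = ∑ i, z * e i := Finset.sum_congr rfl fun i _ => by
        split_ifs with h
        · exact h.symm
        · exact ((hz'.mul_eq_zero_or_eq_of_mem_center hz (hcentral i) (he.idem i)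
            (hprim i)).resolve_right h).symm
    _ = z := by rw [← Finset.mul_sum, he.complete, mul_one]

namespace BooleanSubalgebra

variable {I : Type*} [Fintype I] [DecidableEq I] (L : BooleanSubalgebra (Finset I))

def blockSetoid : Setoid I where
  r i j := ∀ T ∈ L, i ∈ T ↔ j ∈ T
  iseqv := ⟨fun _ _ _ => Iff.rfl, fun h T hT => (h T hT).symm,
    fun h h' T hT => (h T hT).trans (h' T hT)⟩

noncomputable def block (i : I) : Finset I := Finset.univ.filter fun j => L.blockSetoid.r i j

variable {L}

theorem mem_block {i j : I} : j ∈ L.block i ↔ ∀ T ∈ L, i ∈ T ↔ j ∈ T := by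
  simp only [block, Finset.mem_filter, Finset.mem_univ, true_and]
  rfl

theorem mem_block_self (i : I) : i ∈ L.block i := mem_block.2 fun _ _ => Iff.rfl

theorem block_subset {i : I} {T : Finset I} (hT : T ∈ L) (hi : i ∈ T) : L.block i ⊆ T :=
  fun _ hj => (mem_block.1 hj T hT).1 hi

theorem block_mem (i : I) : L.block i ∈ L := by
  have hblock :
      L.block i = (Finset.univ.filter (· ∈ L)).inf fun T => if i ∈ T then T else Tᶜ := by
    ext j
    simp only [mem_block, Finset.mem_inf, Finset.mem_filter, Finset.mem_univ, true_and]
    refine forall₂_congr fun T _ => ?_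
    split_ifs with hi <;> simp [hi]
  rw [hblock]
  refine Finset.inf_induction L.top_mem (fun _ h₁ _ h₂ => L.inf_mem h₁ h₂) fun T hT => ?_
  split_ifs
  · exact (Finset.mem_filter.1 hT).2
  · exact L.compl_mem (Finset.mem_filter.1 hT).2

theorem blockSetoid_le {S : Setoid I} (hS : ∀ i, Finset.univ.filter (fun j => S.r i j) ∈ L) :
    L.blockSetoid ≤ S := fun i j hij => by
  simpa using (hij _ (hS i)).1 (by simp)

theorem exists_eq_block_iff {T : Finset I} :
    (T ∈ L ∧ T.Nonempty ∧
      ∀ T₁ ∈ L, ∀ T₂ ∈ L, Disjoint T₁ T₂ → T₁ ∪ T₂ = T → T₁ = ∅ ∨ T₂ = ∅) ↔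
      ∃ i, T = L.block i := by
  constructor
  · rintro ⟨hT, ⟨i, hi⟩, hatom⟩
    have hsub := block_subset hT hi
    refine ⟨i, ?_⟩
    rcases hatom _ (block_mem i) _ (L.sdiff_mem hT (block_mem i)) Finset.disjoint_sdiff
      (Finset.union_sdiff_of_subset hsub) with h | h
    · exact absurd (h ▸ mem_block_self i) (Finset.notMem_empty i)
    · exact (Finset.sdiff_eq_empty_iff_subset.1 h).antisymm hsub
  · rintro ⟨i, rfl⟩
    refine ⟨block_mem i, ⟨i, mem_block_self i⟩, fun T₁ h₁ T₂ h₂ hd hu => ?_⟩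
    rcases Finset.mem_union.1 (hu ▸ mem_block_self i) with hi | hi
    · exact .inr (hd.symm.eq_bot_of_le ((hu ▸ Finset.subset_union_right).trans
        (block_subset h₁ hi)))
    · exact .inl (hd.eq_bot_of_le ((hu ▸ Finset.subset_union_left).trans (block_subset h₂ hi)))

end BooleanSubalgebra

namespace CompleteOrthogonalIdempotents

variable {B : Type*} [Ring B] {I : Type*} [Fintype I] [DecidableEq I] {e : I → B}

def sumMem (he : CompleteOrthogonalIdempotents e) (C : Subring B) :
    BooleanSubalgebra (Finset I) where
  carrier := {s | ∑ i ∈ s, e i ∈ C}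
  supClosed' s hs t ht := by
    change ∑ i ∈ s ∪ t, e i ∈ C
    rw [← add_sub_cancel_right (∑ i ∈ s ∪ t, e i) (∑ i ∈ s ∩ t, e i), Finset.sum_union_inter,
      ← he.sum_mul_sum]
    exact C.sub_mem (C.add_mem hs ht) (C.mul_mem hs ht)
  infClosed' s hs t ht := by
    change ∑ i ∈ s ∩ t, e i ∈ C
    rw [← he.sum_mul_sum]
    exact C.mul_mem hs ht
  compl_mem' {s} hs := by
    change ∑ i ∈ sᶜ, e i ∈ C
    rw [eq_sub_of_add_eq ((Finset.sum_compl_add_sum s e).trans he.complete)]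
    exact C.sub_mem C.one_mem hs
  bot_mem' := by
    change ∑ i ∈ ∅, e i ∈ C
    rw [Finset.sum_empty]
    exact C.zero_mem

theorem exists_mem_sumMem_sum_eq_iff (he : CompleteOrthogonalIdempotents e)
    (hcentral : ∀ i, e i ∈ Subring.center B)
    (hprim : ∀ i, ∀ f g : B, f ∈ Subring.center B → g ∈ Subring.center B →
      IsIdempotentElem f → IsIdempotentElem g → f * g = 0 → f + g = e i → f = 0 ∨ g = 0)
    {C : Subring B} (hC : ∀ z : B, (∀ a ∈ C, z * a = a * z) → z ∈ Subring.center B) {z : B} :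
    (∃ s ∈ he.sumMem C, ∑ i ∈ s, e i = z) ↔
      z ∈ C ∧ (∀ a ∈ C, z * a = a * z) ∧ IsIdempotentElem z := by
  constructor
  · rintro ⟨s, hs, rfl⟩
    have hcenter : ∑ i ∈ s, e i ∈ Subring.center B := Subring.sum_mem _ fun i _ => hcentral i
    exact ⟨hs, fun a _ => (Subring.mem_center_iff.1 hcenter a).symm,
      he.toOrthogonalIdempotents.isIdempotentElem_sum⟩
  · rintro ⟨hzC, hzcomm, hzidem⟩
    obtain ⟨s, rfl⟩ := he.exists_sum_eq_of_mem_center hcentral hprim (hC z hzcomm) hzidem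
    exact ⟨s, hzC, rfl⟩

theorem isPrimitive_iff_exists_sum_eq (he : CompleteOrthogonalIdempotents e)
    (hne : ∀ i, e i ≠ 0) (hcentral : ∀ i, e i ∈ Subring.center B)
    (hprim : ∀ i, ∀ f g : B, f ∈ Subring.center B → g ∈ Subring.center B →
      IsIdempotentElem f → IsIdempotentElem g → f * g = 0 → f + g = e i → f = 0 ∨ g = 0)
    {C : Subring B} (hC : ∀ z : B, (∀ a ∈ C, z * a = a * z) → z ∈ Subring.center B) {z : B} :
    (z ∈ C ∧ (∀ a ∈ C, z * a = a * z) ∧ IsIdempotentElem z ∧ z ≠ 0 ∧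
      (∀ f g : B, f ∈ C → g ∈ C → (∀ a ∈ C, f * a = a * f) → (∀ a ∈ C, g * a = a * g) →
        IsIdempotentElem f → IsIdempotentElem g → f * g = 0 → f + g = z → f = 0 ∨ g = 0)) ↔
      ∃ s : Finset I, ∑ i ∈ s, e i = z ∧ s ∈ he.sumMem C ∧ s.Nonempty ∧
        ∀ s₁ ∈ he.sumMem C, ∀ s₂ ∈ he.sumMem C,
          Disjoint s₁ s₂ → s₁ ∪ s₂ = s → s₁ = ∅ ∨ s₂ = ∅ := by
  have hsum (x : B) := he.exists_mem_sumMem_sum_eq_iff hcentral hprim hC (z := x)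
  have hzero (s : Finset I) := he.toOrthogonalIdempotents.sum_eq_zero_iff hne (s := s)
  have hmul_eq_zero {s₁ s₂ : Finset I} :
      (∑ i ∈ s₁, e i) * ∑ i ∈ s₂, e i = 0 ↔ Disjoint s₁ s₂ := by
    rw [he.sum_mul_sum, hzero, Finset.disjoint_iff_inter_eq_empty]
  constructor
  · rintro ⟨hzC, hzcomm, hzidem, hz0, hzprim⟩
    obtain ⟨s, hs, rfl⟩ := (hsum _).2 ⟨hzC, hzcomm, hzidem⟩
    refine ⟨s, rfl, hs, Finset.nonempty_iff_ne_empty.2 ((hzero _).not.1 hz0),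
      fun s₁ h₁ s₂ h₂ hd hu => ?_⟩
    obtain ⟨hC₁, hcomm₁, hidem₁⟩ := (hsum _).1 ⟨s₁, h₁, rfl⟩
    obtain ⟨hC₂, hcomm₂, hidem₂⟩ := (hsum _).1 ⟨s₂, h₂, rfl⟩
    simpa only [hzero] using hzprim _ _ hC₁ hC₂ hcomm₁ hcomm₂ hidem₁ hidem₂ (hmul_eq_zero.2 hd)
      (by rw [← Finset.sum_union hd, hu])
  · rintro ⟨s, rfl, hs, hsne, hatom⟩
    obtain ⟨hzC, hzcomm, hzidem⟩ := (hsum _).1 ⟨s, hs, rfl⟩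
    refine ⟨hzC, hzcomm, hzidem, (hzero _).not.2 hsne.ne_empty,
      fun f g hf hg hfcomm hgcomm hfidem hgidem hfg hfgz => ?_⟩
    obtain ⟨s₁, h₁, rfl⟩ := (hsum _).2 ⟨hf, hfcomm, hfidem⟩
    obtain ⟨s₂, h₂, rfl⟩ := (hsum _).2 ⟨hg, hgcomm, hgidem⟩
    have hd := hmul_eq_zero.1 hfg
    have hu : s₁ ∪ s₂ = s :=
      he.toOrthogonalIdempotents.sum_injective hne ((Finset.sum_union hd).trans hfgz)
    simpa only [hzero] using hatom s₁ h₁ s₂ h₂ hd hu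

theorem existsUnique_finest_setoid (he : CompleteOrthogonalIdempotents e)
    (hne : ∀ i, e i ≠ 0) (hcentral : ∀ i, e i ∈ Subring.center B)
    (hprim : ∀ i, ∀ f g : B, f ∈ Subring.center B → g ∈ Subring.center B →
      IsIdempotentElem f → IsIdempotentElem g → f * g = 0 → f + g = e i → f = 0 ∨ g = 0)
    (C : Subring B) (hC : ∀ z : B, (∀ a ∈ C, z * a = a * z) → z ∈ Subring.center B) :
    ∃! S : Setoid I,
      ((∀ i : I, (∑ j ∈ Finset.univ.filter fun j => S.r i j, e j) ∈ C) ∧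
        ∀ S' : Setoid I,
          (∀ i : I, (∑ j ∈ Finset.univ.filter fun j => S'.r i j, e j) ∈ C) → S ≤ S') ∧
      ∀ z : B,
        (z ∈ C ∧ (∀ a ∈ C, z * a = a * z) ∧ IsIdempotentElem z ∧ z ≠ 0 ∧
          (∀ f g : B, f ∈ C → g ∈ C → (∀ a ∈ C, f * a = a * f) → (∀ a ∈ C, g * a = a * g) →
            IsIdempotentElem f → IsIdempotentElem g → f * g = 0 → f + g = z → f = 0 ∨ g = 0))
          ↔ ∃ i : I, z = ∑ j ∈ Finset.univ.filter fun j => S.r i j, e j := by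
  set L := he.sumMem C
  refine ⟨L.blockSetoid, ⟨⟨L.block_mem, fun S' hS' => L.blockSetoid_le hS'⟩, fun z => ?_⟩,
    fun S hS => le_antisymm (hS.1.2 _ L.block_mem) (L.blockSetoid_le hS.1.1)⟩
  simp only [he.isPrimitive_iff_exists_sum_eq hne hcentral hprim hC,
    BooleanSubalgebra.exists_eq_block_iff]
  constructor
  · rintro ⟨s, rfl, i, rfl⟩
    exact ⟨i, rfl⟩
  · rintro ⟨i, rfl⟩
    exact ⟨_, rfl, i, rfl⟩

end CompleteOrthogonalIdempotents

theorem Algebra.TensorProduct.mem_center_of_forall_commute_includeRight {R K A : Type*}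
    [CommRing R] [CommRing K] [Algebra R K] [Ring A] [Algebra R A] {z : K ⊗[R] A}
    (hz : ∀ a : A, z * (1 ⊗ₜ a) = (1 ⊗ₜ a) * z) : z ∈ Subring.center (K ⊗[R] A) := by
  refine Subring.mem_center_iff.2 fun x => ?_
  induction x using TensorProduct.induction_on with
  | zero => rw [zero_mul, mul_zero]
  | tmul k a =>
    rw [show k ⊗ₜ[R] a = k • (1 ⊗ₜ[R] a) by rw [smul_tmul', smul_eq_mul, mul_one],
      smul_mul_assoc, mul_smul_comm, hz]
  | add x y hx hy => rw [add_mul, mul_add, hx, hy]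

theorem blocks_exist_unique_general
    (R : Type*) [CommRing R]
    (K : Type*) [Field K] [Algebra R K]
    (A : Type*) [Ring A] [Algebra R A]
    (I : Type*) [Fintype I]
    (e : I → K ⊗[R] A)
    (hcentral : ∀ i, e i ∈ Subring.center (K ⊗[R] A))
    (hidem : ∀ i, IsIdempotentElem (e i))
    (hne : ∀ i, e i ≠ 0)
    (horth : ∀ i j, i ≠ j → e i * e j = 0)
    (hsum : ∑ i, e i = 1)
    (hprim : ∀ i, ∀ f g : K ⊗[R] A,
      f ∈ Subring.center (K ⊗[R] A) → g ∈ Subring.center (K ⊗[R] A) →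
      IsIdempotentElem f → IsIdempotentElem g → f * g = 0 → f + g = e i → f = 0 ∨ g = 0)
    (ι : A →ₐ[R] K ⊗[R] A) (hι : ι = Algebra.TensorProduct.includeRight) :
    ∃! S : Setoid I,
      ((∀ i : I, (∑ j ∈ Finset.univ.filter fun j => S.r i j, e j) ∈ Set.range ι) ∧
        ∀ S' : Setoid I,
          (∀ i : I, (∑ j ∈ Finset.univ.filter fun j => S'.r i j, e j) ∈ Set.range ι) →
          S ≤ S') ∧
      (∀ z : K ⊗[R] A,
        (z ∈ Set.range ι ∧ (∀ a ∈ Set.range ι, z * a = a * z) ∧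
          IsIdempotentElem z ∧ z ≠ 0 ∧
          (∀ f g : K ⊗[R] A, f ∈ Set.range ι → g ∈ Set.range ι →
            (∀ a ∈ Set.range ι, f * a = a * f) → (∀ a ∈ Set.range ι, g * a = a * g) →
            IsIdempotentElem f → IsIdempotentElem g → f * g = 0 → f + g = z →
            f = 0 ∨ g = 0))
          ↔ ∃ i : I, z = ∑ j ∈ Finset.univ.filter fun j => S.r i j, e j) := by
  subst hι
  have he : CompleteOrthogonalIdempotents e := ⟨⟨hidem, horth⟩, hsum⟩
  exact he.existsUnique_finest_setoid hne hcentral hprim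
    Algebra.TensorProduct.includeRight.range.toSubring fun z hz =>
      Algebra.TensorProduct.mem_center_of_forall_commute_includeRight fun a =>
        hz _ (AlgHom.mem_range_self _ a)

/-- Blocks of an algebra.  Let `A` be an algebra over a commutative integral
domain `R`, free and finitely generated as an `R`-module, and `K ⊇ Frac(R)` a field such that
`KA = K ⊗[R] A` is (split) semisimple, with primitive central idempotents `(e_χ)_{χ ∈ I}`.
Then there exists a unique finest partition (equivalence relation) `Bl(A)` of the index set `I`
such that for every block `B`, the sum `Σ_{χ∈B} e_χ` lies in (the image of) `A`; and the
block sums `e_B` are precisely the primitive idempotents of the centre `Z(A)`. -/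
theorem blocks_exist_unique
    (R : Type*) [CommRing R] [IsDomain R]
    (K : Type*) [Field K] [Algebra R K] (hRK : Function.Injective (algebraMap R K))
    (A : Type*) [Ring A] [Algebra R A] [Module.Free R A] [Module.Finite R A]
    [IsSemisimpleRing (K ⊗[R] A)]
    (I : Type*) [Fintype I]
    (e : I → K ⊗[R] A)
    (hcentral : ∀ i, e i ∈ Subring.center (K ⊗[R] A))
    (hidem : ∀ i, IsIdempotentElem (e i))
    (hne : ∀ i, e i ≠ 0)
    (horth : ∀ i j, i ≠ j → e i * e j = 0)
    (hsum : ∑ i, e i = 1)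
    (hprim : ∀ i, ∀ f g : K ⊗[R] A,
      f ∈ Subring.center (K ⊗[R] A) → g ∈ Subring.center (K ⊗[R] A) →
      IsIdempotentElem f → IsIdempotentElem g → f * g = 0 → f + g = e i → f = 0 ∨ g = 0)
    (ι : A →ₐ[R] K ⊗[R] A) (hι : ι = Algebra.TensorProduct.includeRight) :
    ∃! S : Setoid I,
      ((∀ i : I, (∑ j ∈ Finset.univ.filter fun j => S.r i j, e j) ∈ Set.range ι) ∧
        ∀ S' : Setoid I,
          (∀ i : I, (∑ j ∈ Finset.univ.filter fun j => S'.r i j, e j) ∈ Set.range ι) →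
          S ≤ S') ∧
      (∀ z : K ⊗[R] A,
        (z ∈ Set.range ι ∧ (∀ a ∈ Set.range ι, z * a = a * z) ∧
          IsIdempotentElem z ∧ z ≠ 0 ∧
          (∀ f g : K ⊗[R] A, f ∈ Set.range ι → g ∈ Set.range ι →
            (∀ a ∈ Set.range ι, f * a = a * f) → (∀ a ∈ Set.range ι, g * a = a * g) →
            IsIdempotentElem f → IsIdempotentElem g → f * g = 0 → f + g = z →
            f = 0 ∨ g = 0))
          ↔ ∃ i : I, z = ∑ j ∈ Finset.univ.filter fun j => S.r i j, e j) :=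
  blocks_exist_unique_general R K A I e hcentral hidem hne horth hsum hprim ι hι
end
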